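/- arXiv:2303.11962 — 2 statements merged into one kernel-verified Lean document; each statement's English description precedes it below -/
import Mathlib

section
/- Let K be a Hermitian D×D complex matrix with ‖K‖ < 1, let Π be an orthogonal projector with N := tr Π > 0, and let reals Γ ≥ 0 and 0 ≤ Δ < 1 satisfy KΠ = ΠK, KΠ ≥ √Γ·Π in the Loewner order, and ‖(I−Π)K(I−Π)‖ ≤ √Δ. Then the fixed point ρ∞ := (I−K²)^{−1}/tr((I−K²)^{−1}) satisfies tr(Π ρ∞) ≥ 1 − r·(D/N − 1) / (1 + r·(D/N − 1)), where r := (1−Γ)/(1−Δ). In particular this shows that the fixed-point overlap bound tr(Πρ∞) ≥ (1−Δ)/((Γ−Δ)+(D/N)(1−Γ)) is attained by the explicit fixed point, i.e. the bound is tight in terms of the AGSP parameters. -/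
/-!
Put `M = (1 - K²)⁻¹ ≥ 0`, `a = tr (M Π)` and `b = tr (M (1 - Π))`, so that
`tr (Π ρ∞) = a / (a + b)`. Because `K` commutes with `Π`, the hypotheses give the Loewner bounds
`K² Π ≥ Γ Π` and `K² (1 - Π) ≤ Δ (1 - Π)`. Multiplying by `M` and taking traces, using
`M K² = M - 1`, turns them into `N ≤ (1 - Γ) a` and `(1 - Δ) b ≤ D - N`, and the claimed bound on
`a / (a + b)` follows.
-/

open scoped Matrix.Norms.L2Operator ComplexOrder

section CStarAlgebra

variable {A : Type*} [CStarAlgebra A] [PartialOrder A] [StarOrderedRing A]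

theorem isStrictlyPositive_one_sub_star_mul_self {k : A} (hk : ‖k‖ < 1) :
    IsStrictlyPositive (1 - star k * k) := by
  have hpos : IsStrictlyPositive (algebraMap ℝ A (1 - ‖k‖ ^ 2)) :=
    isStrictlyPositive_algebraMap (by nlinarith [norm_nonneg k])
  refine hpos.of_le ?_
  rw [map_sub, map_one]
  exact sub_le_sub_left CStarAlgebra.star_mul_le_algebraMap_norm_sq 1

namespace IsStarProjection

variable {p k : A}

theorem sq_smul_le_sq_mul (hp : IsStarProjection p) (hkp : Commute k p) {s : ℝ} (hs : 0 ≤ s)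
    (h : s • p ≤ k * p) : s ^ 2 • p ≤ k ^ 2 * p := by
  have hpp : p * p = p := hp.isIdempotentElem
  have hxp : k * p * p = k * p := by rw [mul_assoc, hpp]
  have hpx : p * (k * p) = k * p := by rw [← mul_assoc, ← hkp.eq, mul_assoc, hpp]
  have hxx : k * p * (k * p) = k ^ 2 * p := by rw [mul_assoc, hpx, ← mul_assoc, sq]
  have hgap : 0 ≤ k * p - s • p := sub_nonneg.mpr h
  have key : k ^ 2 * p - s ^ 2 • p = (k * p - s • p) ^ 2 + (2 * s) • (k * p - s • p) := by
    simp only [sq (k * p - s • p), sub_mul, mul_sub, smul_mul_assoc, mul_smul_comm, smul_sub,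
      smul_smul, hpp, hxp, hpx, hxx]
    module
  exact sub_nonneg.mp (key ▸ add_nonneg (IsSelfAdjoint.of_nonneg hgap).sq_nonneg
    (smul_nonneg (by positivity) hgap))

theorem star_mul_self_mul_le (hp : IsStarProjection p) (hkp : Commute k p) :
    star k * k * p ≤ ‖p * k * p‖ ^ 2 • p := by
  have hpp : p * p = p := hp.isIdempotentElem
  have hpk : p * k * p = k * p := by rw [← hkp.eq, mul_assoc, hpp]
  have hcompress : p * (star (p * k * p) * (p * k * p)) * p = star k * k * p := by
    have hk'p : Commute (star k) p := by simpa [hp.isSelfAdjoint.star_eq] using hkp.star_star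
    rw [hpk, star_mul, hp.isSelfAdjoint.star_eq, ← mul_assoc, ← mul_assoc, ← mul_assoc, hpp,
      ← hk'p.eq]
    simp only [← hkp.eq, mul_assoc, hpp]
  have := hp.isSelfAdjoint.conjugate_le_conjugate
    (CStarAlgebra.star_mul_le_algebraMap_norm_sq (a := p * k * p))
  rwa [hcompress, Algebra.algebraMap_eq_smul_one, mul_smul_comm, smul_mul_assoc, mul_one, hpp]
    at this

end IsStarProjection

end CStarAlgebra

namespace Matrix

variable {n : Type*} [Fintype n] [DecidableEq n]

theorem trace_inv_one_sub_mul_mul {R : Type*} [CommRing R] {X : Matrix n n R}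
    (hX : IsUnit (1 - X)) (Y : Matrix n n R) :
    ((1 - X)⁻¹ * (X * Y)).trace = ((1 - X)⁻¹ * Y).trace - Y.trace := by
  have hinv : (1 - X)⁻¹ * X = (1 - X)⁻¹ - 1 :=
    calc (1 - X)⁻¹ * X = (1 - X)⁻¹ * (1 - (1 - X)) := by rw [sub_sub_cancel]
      _ = (1 - X)⁻¹ - 1 := by
        rw [mul_sub, mul_one, nonsing_inv_mul _ ((isUnit_iff_isUnit_det _).mp hX)]
  rw [← mul_assoc, hinv, sub_mul, one_mul, trace_sub]

theorem re_trace_mul_inv_re_trace_smul (M P : Matrix n n ℂ) :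
    (P * ((M.trace.re)⁻¹ • M)).trace.re =
      (M * P).trace.re / ((M * P).trace.re + (M * (1 - P)).trace.re) := by
  rw [← Complex.add_re, ← trace_add, ← mul_add, add_sub_cancel, mul_one, Matrix.mul_smul,
    trace_smul, trace_mul_comm, Complex.real_smul, Complex.re_ofReal_mul, inv_mul_eq_div]

open scoped MatrixOrder

theorem trace_mul_le_trace_mul_of_le {M X Y : Matrix n n ℂ} (hM : 0 ≤ M) (h : X ≤ Y) :
    (M * X).trace ≤ (M * Y).trace := by
  obtain ⟨S, hS⟩ := CStarAlgebra.nonneg_iff_eq_star_mul_self.mp (sub_nonneg.mpr h)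
  have := (nonneg_iff_posSemidef.mp hM).mul_mul_conjTranspose_same S |>.trace_nonneg
  rwa [← sub_nonneg, ← trace_sub, ← mul_sub, hS, star_eq_conjTranspose, ← mul_assoc,
    trace_mul_cycle]

theorem posDef_one_sub_sq {K : Matrix n n ℂ} (hK : K.IsHermitian) (hK1 : ‖K‖ < 1) :
    (1 - K ^ 2).PosDef := by
  have hsq : K ^ 2 = star K * K := by rw [sq, star_eq_conjTranspose, hK.eq]
  exact isStrictlyPositive_iff_posDef.mp (hsq ▸ isStrictlyPositive_one_sub_star_mul_self hK1)

theorem re_trace_inv_one_sub_sq_mul_nonneg {K P : Matrix n n ℂ} (hK : K.IsHermitian)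
    (hK1 : ‖K‖ < 1) (hP : IsStarProjection P) : 0 ≤ ((1 - K ^ 2)⁻¹ * P).trace.re := by
  have := trace_mul_le_trace_mul_of_le (posDef_one_sub_sq hK hK1).inv.posSemidef.nonneg hP.nonneg
  rw [mul_zero, trace_zero, Complex.le_def, Complex.zero_re] at this
  exact this.1

theorem re_trace_le_of_smul_le_mul {K P : Matrix n n ℂ} (hK : K.IsHermitian) (hK1 : ‖K‖ < 1)
    (hP : IsStarProjection P) (hKP : Commute K P) {s : ℝ} (hs : 0 ≤ s)
    (h : (K * P - (s : ℂ) • P).PosSemidef) :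
    P.trace.re ≤ (1 - s ^ 2) * ((1 - K ^ 2)⁻¹ * P).trace.re := by
  have hA := posDef_one_sub_sq hK hK1
  have hK2 := hP.sq_smul_le_sq_mul hKP hs
    (by rw [RCLike.real_smul_eq_coe_smul (K := ℂ)]; exact le_iff.mpr h)
  have := (Complex.le_def.mp (trace_mul_le_trace_mul_of_le hA.inv.posSemidef.nonneg hK2)).1
  rw [Matrix.mul_smul, trace_smul, trace_inv_one_sub_mul_mul hA.isUnit, Complex.smul_re,
    Complex.sub_re, smul_eq_mul] at this
  linarith

theorem mul_re_trace_le_re_trace {K P : Matrix n n ℂ} (hK : K.IsHermitian) (hK1 : ‖K‖ < 1)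
    (hP : IsStarProjection P) (hKP : Commute K P) :
    (1 - ‖P * K * P‖ ^ 2) * ((1 - K ^ 2)⁻¹ * P).trace.re ≤ P.trace.re := by
  have hA := posDef_one_sub_sq hK hK1
  have hK2 := hP.star_mul_self_mul_le hKP
  rw [star_eq_conjTranspose, hK.eq, ← sq] at hK2
  have := (Complex.le_def.mp (trace_mul_le_trace_mul_of_le hA.inv.posSemidef.nonneg hK2)).1
  rw [Matrix.mul_smul, trace_smul, trace_inv_one_sub_mul_mul hA.isUnit, Complex.smul_re,
    Complex.sub_re, smul_eq_mul] at this
  linarith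

end Matrix

theorem one_sub_div_one_add_le_div {a b N D Γ Δ : ℝ} (ha : 0 ≤ a) (hb : 0 ≤ b) (hN : 0 < N)
    (hΔ : Δ < 1) (hΓa : N ≤ (1 - Γ) * a) (hΔb : (1 - Δ) * b ≤ D - N) :
    1 - (1 - Γ) / (1 - Δ) * (D / N - 1) / (1 + (1 - Γ) / (1 - Δ) * (D / N - 1)) ≤
      a / (a + b) := by
  have hΓ : 0 < 1 - Γ := pos_of_mul_pos_left (hN.trans_le hΓa) ha
  have hΔ' : 0 < 1 - Δ := sub_pos.mpr hΔ
  have hDN : 0 ≤ D - N := (mul_nonneg hΔ'.le hb).trans hΔb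
  have hrt : (1 - Γ) / (1 - Δ) * (D / N - 1) = (1 - Γ) * (D - N) / ((1 - Δ) * N) := by
    field_simp
  have hb_le : b ≤ a * ((1 - Γ) * (D - N) / ((1 - Δ) * N)) := by
    rw [mul_div_assoc', le_div_iff₀ (mul_pos hΔ' hN)]
    nlinarith [mul_le_mul_of_nonneg_right hΓa hDN]
  have ha' : 0 < a := pos_of_mul_pos_right (hN.trans_le hΓa) hΓ.le
  rw [hrt, one_sub_div (by positivity), add_sub_cancel_right,
    div_le_div_iff₀ (by positivity) (by positivity)]
  nlinarith

theorem stmt8_general (D : ℕ)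
    (K P : Matrix (Fin D) (Fin D) ℂ)
    (hK : K.IsHermitian) (hKnorm : ‖K‖ < 1)
    (hPherm : P.IsHermitian) (hPproj : P * P = P)
    (hN : 0 < P.trace.re)
    (Γ Δ : ℝ) (hΔ0 : 0 ≤ Δ) (hΔ1 : Δ < 1)
    (hcomm : K * P = P * K)
    (hGamma : (K * P - (Real.sqrt Γ : ℂ) • P).PosSemidef)
    (hDelta : ‖(1 - P) * K * (1 - P)‖ ≤ Real.sqrt Δ) :
    (let r : ℝ := (1 - Γ) / (1 - Δ)
     let ρfix : Matrix (Fin D) (Fin D) ℂ :=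
       (((1 - K ^ 2)⁻¹).trace.re)⁻¹ • (1 - K ^ 2)⁻¹
     1 - r * ((D : ℝ) / P.trace.re - 1) / (1 + r * ((D : ℝ) / P.trace.re - 1)) ≤
       (P * ρfix).trace.re) := by
  intro r ρfix
  have hP : IsStarProjection P := ⟨hPproj, hPherm⟩
  have hQ : IsStarProjection (1 - P) := hP.one_sub
  have hKQ : Commute K (1 - P) := (Commute.one_right K).sub_right hcomm
  have ha := Matrix.re_trace_inv_one_sub_sq_mul_nonneg hK hKnorm hP
  have hb := Matrix.re_trace_inv_one_sub_sq_mul_nonneg hK hKnorm hQ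
  -- `√Γ = 0` when `Γ < 0`, so `√Γ ^ 2 = Γ` can fail
  have hΓ : Γ ≤ √Γ ^ 2 := Real.sq_sqrt' (x := Γ) ▸ le_max_left Γ 0
  have hΔ : ‖(1 - P) * K * (1 - P)‖ ^ 2 ≤ Δ :=
    (pow_le_pow_left₀ (norm_nonneg _) hDelta 2).trans (Real.sq_sqrt hΔ0).le
  have hlow := Matrix.re_trace_le_of_smul_le_mul hK hKnorm hP hcomm (Real.sqrt_nonneg Γ) hGamma
  have hup := Matrix.mul_re_trace_le_re_trace hK hKnorm hQ hKQ
  have htrQ : (1 - P).trace.re = D - P.trace.re := by simp [Matrix.trace_sub]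
  rw [show (P * ρfix).trace.re = _ from Matrix.re_trace_mul_inv_re_trace_smul _ P]
  refine one_sub_div_one_add_le_div ha hb hN hΔ1 (hlow.trans ?_) (htrQ ▸ hup.trans' ?_)
  · exact mul_le_mul_of_nonneg_right (by linarith) ha
  · exact mul_le_mul_of_nonneg_right (by linarith) hb

/-- Overlap of the explicit fixed point `(I - K²)⁻¹/tr((I - K²)⁻¹)` with the projector `Π`,
showing the fixed-point overlap bound is tight in terms of the AGSP parameters. -/
theorem stmt8 (D : ℕ) (hD : 1 ≤ D)
    (K P : Matrix (Fin D) (Fin D) ℂ)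
    (hK : K.IsHermitian) (hKnorm : ‖K‖ < 1)
    (hPherm : P.IsHermitian) (hPproj : P * P = P)
    (hN : 0 < P.trace.re)
    (Γ Δ : ℝ) (hΓ : 0 ≤ Γ) (hΔ0 : 0 ≤ Δ) (hΔ1 : Δ < 1)
    (hcomm : K * P = P * K)
    (hGamma : (K * P - (Real.sqrt Γ : ℂ) • P).PosSemidef)
    (hDelta : ‖(1 - P) * K * (1 - P)‖ ≤ Real.sqrt Δ) :
    (let r : ℝ := (1 - Γ) / (1 - Δ)
     let ρfix : Matrix (Fin D) (Fin D) ℂ :=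
       (((1 - K ^ 2)⁻¹).trace.re)⁻¹ • (1 - K ^ 2)⁻¹
     1 - r * ((D : ℝ) / P.trace.re - 1) / (1 + r * ((D : ℝ) / P.trace.re - 1)) ≤
       (P * ρfix).trace.re) :=
  stmt8_general D K P hK hKnorm hPherm hPproj hN Γ Δ hΔ0 hΔ1 hcomm hGamma hDelta
end

section
/- Let n ≥ 1 and for each t ∈ {1,…,n} let K_t be a Hermitian D×D complex matrix with ‖K_t‖ ≤ 1, let Π_t be an orthogonal projector, and let reals Γ_t, Δ_t ∈ [0,1] and ε_t ≥ 0 satisfy K_tΠ_t = Π_tK_t, K_tΠ_t ≥ √Γ_t·Π_t in the Loewner order, ‖(I−Π_t)K_t(I−Π_t)‖ ≤ √Δ_t, and ‖Π_t − Π₀‖ ≤ ε_t, where Π₀ is a fixed orthogonal projector. Let ρ be a density matrix and set K := K_n K_{n−1} ⋯ K_1. Then tr(K ρ K† Π₀) ≥ tr(ρ Π₀)·∏_{t=1}^n Γ_t − 2∑_{t=1}^n ε_t ∏_{s=t+1}^n Γ_s, and tr(K ρ K† (I−Π₀)) ≤ tr(ρ (I−Π₀))·∏_{t=1}^n Δ_t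 + 2∑_{t=1}^n ε_t ∏_{s=t+1}^n Δ_s. -/
open scoped Matrix Matrix.Norms.L2Operator ComplexOrder

/-!
Write `σₜ = Kₜ₋₁ ⋯ K₀ ρ (Kₜ₋₁ ⋯ K₀)†`, a subnormalized state since `‖Kₜ‖ ≤ 1`. The hypotheses on
`Kₜ` give the operator inequalities `Kₜ Πₜ Kₜ ≥ Γₜ Πₜ` (expand `Kₜ Πₜ Kₜ = (C + √Γₜ Πₜ)²` with
`C = Kₜ Πₜ - √Γₜ Πₜ ≥ 0`) and `Kₜ (1 - Πₜ) Kₜ ≤ Δₜ (1 - Πₜ)` (the C⋆-identity for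
`(1 - Πₜ) Kₜ (1 - Πₜ)`). Pairing them with `σₜ` and replacing `Πₜ` by `Π₀` on both sides costs at
most `εₜ` each time, because `|tr (σ X)| ≤ ‖X‖ tr σ` for Hermitian `X`. This yields
`tr (σₜ₊₁ Π₀) ≥ Γₜ tr (σₜ Π₀) - 2εₜ` and `tr (σₜ₊₁ (1 - Π₀)) ≤ Δₜ tr (σₜ (1 - Π₀)) + 2εₜ`, and
unrolling these linear recursions gives the theorem.
-/

open scoped MatrixOrder
open Finset

theorem Commute.mul_mul_mul_self_of_isIdempotentElem {R : Type*} [Semigroup R] {k p : R}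
    (hkp : Commute k p) (hp : IsIdempotentElem p) : k * p * (k * p) = k * p * k := by
  rw [mul_assoc, ← mul_assoc p, ← hkp.eq, mul_assoc k p p, hp.eq, mul_assoc k p k, ← hkp.eq]

section CStarAlgebra

variable {A : Type*} [CStarAlgebra A] [PartialOrder A] [StarOrderedRing A]

theorem sq_smul_le_mul_mul_of_smul_le_mul {k p : A} (hp : IsIdempotentElem p)
    (hkp : Commute k p) {g : ℝ} (hg : 0 ≤ g) (h : g • p ≤ k * p) : g ^ 2 • p ≤ k * p * k := by
  set c := k * p - g • p with hc_def
  have hc : 0 ≤ c := sub_nonneg.mpr h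
  have hcp : c * p = c := by
    rw [hc_def, sub_mul, mul_assoc, hp.eq, smul_mul_assoc, hp.eq]
  have hpc : p * c = c := by
    rw [hc_def, mul_sub, ← mul_assoc, ← hkp.eq, mul_assoc, hp.eq, mul_smul_comm, hp.eq]
  have hexpand : k * p * k - g ^ 2 • p = star c * c + (2 * g) • c := by
    rw [(IsSelfAdjoint.of_nonneg hc).star_eq, ← hkp.mul_mul_mul_self_of_isIdempotentElem hp,
      show k * p = c + g • p by rw [hc_def]; abel, add_mul, mul_add, mul_add, smul_mul_assoc,
      mul_smul_comm, smul_mul_assoc, mul_smul_comm, hcp, hpc, hp.eq, smul_smul]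
    module
  rw [← sub_nonneg, hexpand]
  exact add_nonneg (star_mul_self_nonneg c) (smul_nonneg (by positivity) hc)

theorem mul_mul_le_norm_sq_smul_of_commute {k q : A} (hk : IsSelfAdjoint k)
    (hq : IsStarProjection q) (hkq : Commute k q) : k * q * k ≤ ‖q * k * q‖ ^ 2 • q := by
  have hqq := hq.isIdempotentElem.eq
  have hb : q * k * q = k * q := by rw [← hkq.eq, mul_assoc, hqq]
  rw [hb]
  have hsb : star (k * q) = k * q := by
    rw [star_mul, hk.star_eq, hq.isSelfAdjoint.star_eq, hkq.eq]
  have hqb : q * (k * q) = k * q := by rw [← mul_assoc, hb]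
  have hbq : k * q * q = k * q := by rw [mul_assoc, hqq]
  calc k * q * k = q * (star (k * q) * (k * q)) * q := by
        rw [hsb, ← mul_assoc q, hqb, mul_assoc (k * q) (k * q) q, hbq,
          hkq.mul_mul_mul_self_of_isIdempotentElem hq.isIdempotentElem]
    _ ≤ q * algebraMap ℝ A (‖k * q‖ ^ 2) * q :=
        hq.isSelfAdjoint.conjugate_le_conjugate CStarAlgebra.star_mul_le_algebraMap_norm_sq
    _ = ‖k * q‖ ^ 2 • q := by
        rw [Algebra.algebraMap_eq_smul_one, mul_smul_comm, mul_one, smul_mul_assoc, hqq]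

end CStarAlgebra

theorem le_mul_prod_add_sum_of_le_mul_add {n : ℕ} {a c y : ℕ → ℝ}
    (ha : ∀ t ∈ range n, 0 ≤ a t) (hy : ∀ t ∈ range n, y (t + 1) ≤ a t * y t + c t) :
    y n ≤ y 0 * ∏ t ∈ range n, a t + ∑ t ∈ range n, c t * ∏ s ∈ Ico (t + 1) n, a s := by
  induction n with
  | zero => simp
  | succ n ih =>
    have hsub : range n ⊆ range (n + 1) := range_subset_range.mpr n.le_succ
    have hn : n ∈ range (n + 1) := self_mem_range_succ n
    have hsum : ∑ t ∈ range (n + 1), c t * ∏ s ∈ Ico (t + 1) (n + 1), a s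
        = a n * ∑ t ∈ range n, c t * ∏ s ∈ Ico (t + 1) n, a s + c n := by
      rw [sum_range_succ, Ico_self, prod_empty, mul_one, mul_sum]
      congr 1
      refine sum_congr rfl fun t ht => ?_
      rw [prod_Ico_succ_top (mem_range.mp ht)]
      ring
    rw [prod_range_succ, hsum]
    calc y (n + 1) ≤ a n * y n + c n := hy n hn
      _ ≤ a n * (y 0 * ∏ t ∈ range n, a t + ∑ t ∈ range n, c t * ∏ s ∈ Ico (t + 1) n, a s)
          + c n := by
        gcongr
        · exact ha n hn
        · exact ih (fun t ht => ha t (hsub ht)) fun t ht => hy t (hsub ht)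
      _ = _ := by ring

def orderedProd {M : Type*} [Monoid M] (K : ℕ → M) (t : ℕ) : M :=
  (List.ofFn fun i : Fin t => K i).reverse.prod

theorem orderedProd_zero {M : Type*} [Monoid M] (K : ℕ → M) : orderedProd K 0 = 1 := rfl

theorem orderedProd_succ {M : Type*} [Monoid M] (K : ℕ → M) (t : ℕ) :
    orderedProd K (t + 1) = K t * orderedProd K t := by
  rw [orderedProd, List.ofFn_succ']
  simp [orderedProd]

namespace Matrix

variable {m : Type*} [Fintype m] {σ X Y : Matrix m m ℂ}

theorem re_trace_nonneg (hσ : 0 ≤ σ) : 0 ≤ σ.trace.re :=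
  (Complex.nonneg_iff.mp (nonneg_iff_posSemidef.mp hσ).trace_nonneg).1

variable [DecidableEq m]

theorem re_trace_mul_nonneg (hσ : 0 ≤ σ) (hX : 0 ≤ X) : 0 ≤ (σ * X).trace.re := by
  obtain ⟨C, rfl⟩ := CStarAlgebra.nonneg_iff_eq_star_mul_self.mp hX
  rw [← Matrix.mul_assoc, trace_mul_cycle]
  exact re_trace_nonneg (star_right_conjugate_nonneg hσ C)

theorem re_trace_mul_mono (hσ : 0 ≤ σ) (hXY : X ≤ Y) :
    (σ * X).trace.re ≤ (σ * Y).trace.re := by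
  have := re_trace_mul_nonneg hσ (sub_nonneg.mpr hXY)
  rwa [Matrix.mul_sub, trace_sub, Complex.sub_re, sub_nonneg] at this

theorem re_trace_mul_algebraMap (σ : Matrix m m ℂ) (r : ℝ) :
    (σ * algebraMap ℝ (Matrix m m ℂ) r).trace.re = r * σ.trace.re := by
  simp [Algebra.algebraMap_eq_smul_one]

theorem abs_re_trace_mul_le (hσ : 0 ≤ σ) (hX : IsSelfAdjoint X) :
    |(σ * X).trace.re| ≤ ‖X‖ * σ.trace.re := by
  have hle := re_trace_mul_mono hσ hX.le_algebraMap_norm_self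
  have hge := re_trace_mul_mono hσ hX.neg_algebraMap_norm_le_self
  rw [re_trace_mul_algebraMap] at hle
  rw [Matrix.mul_neg, trace_neg, Complex.neg_re, re_trace_mul_algebraMap] at hge
  exact abs_le.mpr ⟨hge, hle⟩

variable {K : Matrix m m ℂ}

theorem abs_re_trace_mul_conj_le_norm (hσ : 0 ≤ σ) (hσ1 : σ.trace.re ≤ 1)
    (hK : IsSelfAdjoint K) (hK1 : ‖K‖ ≤ 1) (hY : IsSelfAdjoint Y) :
    |(σ * (K * Y * K)).trace.re| ≤ ‖Y‖ := by
  have hKYK : ‖K * Y * K‖ ≤ ‖Y‖ := calc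
    ‖K * Y * K‖ ≤ ‖K‖ * ‖Y‖ * ‖K‖ := norm_mul₃_le
    _ ≤ 1 * ‖Y‖ * 1 := by gcongr
    _ = ‖Y‖ := by ring
  calc |(σ * (K * Y * K)).trace.re| ≤ ‖K * Y * K‖ * σ.trace.re :=
        abs_re_trace_mul_le hσ (hY.conjugate_self hK)
    _ ≤ ‖Y‖ * 1 := by gcongr; exact re_trace_nonneg hσ
    _ = ‖Y‖ := mul_one _

theorem re_trace_conj_le_re_trace (hσ : 0 ≤ σ) (hK : IsSelfAdjoint K) (hK1 : ‖K‖ ≤ 1) :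
    (K * σ * K).trace.re ≤ σ.trace.re := by
  have hKK : IsSelfAdjoint (K * K) := by simpa [hK.star_eq] using IsSelfAdjoint.star_mul_self K
  have hKK1 : ‖K * K‖ ≤ 1 := (norm_mul_le K K).trans (mul_le_one₀ hK1 (norm_nonneg K) hK1)
  have hcyc : (K * σ * K).trace = (σ * (K * K)).trace := by
    rw [Matrix.mul_assoc, trace_mul_comm, Matrix.mul_assoc]
  rw [hcyc]
  nlinarith [abs_le.mp (abs_re_trace_mul_le hσ hKK), re_trace_nonneg hσ]

theorem smul_re_trace_mul_sub_le_of_smul_le_conj (hσ : 0 ≤ σ) (hσ1 : σ.trace.re ≤ 1)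
    {X₀ : Matrix m m ℂ} {c ε : ℝ} (hK : IsSelfAdjoint K) (hK1 : ‖K‖ ≤ 1)
    (hX : IsSelfAdjoint X) (hX₀ : IsSelfAdjoint X₀) (hXX₀ : ‖X - X₀‖ ≤ ε)
    (hc₀ : 0 ≤ c) (hc₁ : c ≤ 1) (hKXK : c • X ≤ K * X * K) :
    c * (σ * X₀).trace.re - 2 * ε ≤ (K * σ * K * X₀).trace.re := by
  have hε : 0 ≤ ε := (norm_nonneg _).trans hXX₀
  have hpert : (σ * X₀).trace.re - ε ≤ (σ * X).trace.re := by
    have := abs_le.mp (abs_re_trace_mul_le hσ (hX.sub hX₀))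
    rw [Matrix.mul_sub, trace_sub, Complex.sub_re] at this
    nlinarith [re_trace_nonneg hσ, norm_nonneg (X - X₀)]
  have hgap : c * (σ * X).trace.re ≤ (σ * (K * X * K)).trace.re := by
    simpa [Matrix.mul_smul, trace_smul] using re_trace_mul_mono hσ hKXK
  have hpert' : (σ * (K * X * K)).trace.re - ε ≤ (σ * (K * X₀ * K)).trace.re := by
    have := abs_le.mp (abs_re_trace_mul_conj_le_norm hσ hσ1 hK hK1 (hX.sub hX₀))
    rw [Matrix.mul_sub, Matrix.sub_mul, Matrix.mul_sub, trace_sub, Complex.sub_re] at this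
    linarith
  have hcyc : (K * σ * K * X₀).trace = (σ * (K * X₀ * K)).trace := by
    simp only [Matrix.mul_assoc]; rw [trace_mul_comm K]; simp only [Matrix.mul_assoc]
  rw [hcyc]
  nlinarith [mul_le_mul_of_nonneg_left hpert hc₀, mul_le_of_le_one_left hε hc₁]

variable {P P₀ : Matrix m m ℂ} {ε : ℝ}

theorem ground_overlap_step (hσ : 0 ≤ σ) (hσ1 : σ.trace.re ≤ 1) (hK : IsSelfAdjoint K)
    (hK1 : ‖K‖ ≤ 1) (hP : IsStarProjection P) (hKP : Commute K P) (hP₀ : IsSelfAdjoint P₀)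
    (hPP₀ : ‖P - P₀‖ ≤ ε) {Γ : ℝ} (hΓ : Γ ∈ Set.Icc (0 : ℝ) 1) (hgap : √Γ • P ≤ K * P) :
    Γ * (σ * P₀).trace.re - 2 * ε ≤ (K * σ * K * P₀).trace.re := by
  have hKPK := sq_smul_le_mul_mul_of_smul_le_mul hP.isIdempotentElem hKP (Real.sqrt_nonneg _) hgap
  rw [Real.sq_sqrt hΓ.1] at hKPK
  exact smul_re_trace_mul_sub_le_of_smul_le_conj hσ hσ1 hK hK1 hP.isSelfAdjoint hP₀ hPP₀ hΓ.1 hΓ.2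
    hKPK

theorem excited_overlap_step (hσ : 0 ≤ σ) (hσ1 : σ.trace.re ≤ 1) (hK : IsSelfAdjoint K)
    (hK1 : ‖K‖ ≤ 1) (hP : IsStarProjection P) (hKP : Commute K P) (hP₀ : IsSelfAdjoint P₀)
    (hPP₀ : ‖P - P₀‖ ≤ ε) {Δ : ℝ} (hΔ : Δ ∈ Set.Icc (0 : ℝ) 1)
    (hgap : ‖(1 - P) * K * (1 - P)‖ ≤ √Δ) :
    (K * σ * K * (1 - P₀)).trace.re ≤ Δ * (σ * (1 - P₀)).trace.re + 2 * ε := by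
  have hQ : IsStarProjection (1 - P) := hP.one_sub
  have hKQK : K * (1 - P) * K ≤ Δ • (1 - P) := by
    refine (mul_mul_le_norm_sq_smul_of_commute hK hQ ((Commute.one_right _).sub_right hKP)).trans ?_
    refine smul_le_smul_of_nonneg_right ?_ hQ.nonneg
    calc ‖(1 - P) * K * (1 - P)‖ ^ 2 ≤ √Δ ^ 2 := by gcongr
      _ = Δ := Real.sq_sqrt hΔ.1
  -- the Δ-bound is the Γ-type lower bound for the negated projectors `-(1 - P)` and `-(1 - P₀)`
  have hdist : ‖-(1 - P) - -(1 - P₀)‖ ≤ ε := by rwa [show -(1 - P) - -(1 - P₀) = P - P₀ by abel]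
  have := smul_re_trace_mul_sub_le_of_smul_le_conj hσ hσ1 hK hK1 hQ.isSelfAdjoint.neg
    ((IsSelfAdjoint.one _).sub hP₀).neg hdist hΔ.1 hΔ.2
    (by simpa only [smul_neg, Matrix.mul_neg, Matrix.neg_mul, neg_le_neg_iff] using hKQK)
  simp only [Matrix.mul_neg, trace_neg, Complex.neg_re] at this
  linarith

variable (K : ℕ → Matrix m m ℂ) (ρ : Matrix m m ℂ)

def evolvedState (t : ℕ) : Matrix m m ℂ := orderedProd K t * ρ * (orderedProd K t)ᴴ

theorem evolvedState_zero : evolvedState K ρ 0 = ρ := by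
  simp [evolvedState, orderedProd_zero]

theorem evolvedState_succ {t : ℕ} (hK : IsSelfAdjoint (K t)) :
    evolvedState K ρ (t + 1) = K t * evolvedState K ρ t * K t := by
  simp only [evolvedState, orderedProd_succ, ← star_eq_conjTranspose, star_mul, hK.star_eq,
    Matrix.mul_assoc]

variable {K ρ}

theorem evolvedState_nonneg (hρ : 0 ≤ ρ) (t : ℕ) : 0 ≤ evolvedState K ρ t :=
  star_right_conjugate_nonneg hρ _

theorem re_trace_evolvedState_le {n : ℕ} (hρ : 0 ≤ ρ) (hK : ∀ t ∈ range n, IsSelfAdjoint (K t))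
    (hK1 : ∀ t ∈ range n, ‖K t‖ ≤ 1) : ∀ t ≤ n, (evolvedState K ρ t).trace.re ≤ ρ.trace.re := by
  intro t
  induction t with
  | zero => simp [evolvedState_zero]
  | succ t ih =>
    intro ht
    have htn : t ∈ range n := mem_range.mpr ht
    rw [evolvedState_succ K ρ (hK t htn)]
    exact (re_trace_conj_le_re_trace (evolvedState_nonneg hρ t) (hK t htn) (hK1 t htn)).trans
      (ih (by omega))

end Matrix

open Matrix

theorem stmt12_general (D : ℕ) (n : ℕ)
    (K P : ℕ → Matrix (Fin D) (Fin D) ℂ)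
    (P₀ : Matrix (Fin D) (Fin D) ℂ)
    (Γ Δ ε : ℕ → ℝ)
    (hP₀herm : P₀.IsHermitian)
    (hKherm : ∀ t ∈ Finset.range n, (K t).IsHermitian)
    (hKnorm : ∀ t ∈ Finset.range n, ‖K t‖ ≤ 1)
    (hPherm : ∀ t ∈ Finset.range n, (P t).IsHermitian)
    (hPproj : ∀ t ∈ Finset.range n, P t * P t = P t)
    (hΓ : ∀ t ∈ Finset.range n, Γ t ∈ Set.Icc (0 : ℝ) 1)
    (hΔ : ∀ t ∈ Finset.range n, Δ t ∈ Set.Icc (0 : ℝ) 1)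
    (hcomm : ∀ t ∈ Finset.range n, K t * P t = P t * K t)
    (hGamma : ∀ t ∈ Finset.range n, (K t * P t - (Real.sqrt (Γ t) : ℂ) • P t).PosSemidef)
    (hDelta : ∀ t ∈ Finset.range n, ‖(1 - P t) * K t * (1 - P t)‖ ≤ Real.sqrt (Δ t))
    (hPP₀ : ∀ t ∈ Finset.range n, ‖P t - P₀‖ ≤ ε t)
    (ρ : Matrix (Fin D) (Fin D) ℂ) (hρ : ρ.PosSemidef) (hρtr : ρ.trace = 1) :
    (let Kprod : Matrix (Fin D) (Fin D) ℂ := ((List.ofFn fun i : Fin n => K i).reverse).prod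
     (ρ * P₀).trace.re * (∏ t ∈ Finset.range n, Γ t) -
         2 * ∑ t ∈ Finset.range n, ε t * ∏ s ∈ Finset.Ico (t + 1) n, Γ s ≤
       (Kprod * ρ * Kprodᴴ * P₀).trace.re ∧
     (Kprod * ρ * Kprodᴴ * (1 - P₀)).trace.re ≤
       (ρ * (1 - P₀)).trace.re * (∏ t ∈ Finset.range n, Δ t) +
         2 * ∑ t ∈ Finset.range n, ε t * ∏ s ∈ Finset.Ico (t + 1) n, Δ s) := by
  intro Kprod
  have hstate (t : ℕ) (ht : t ∈ range n) :
      0 ≤ evolvedState K ρ t ∧ (evolvedState K ρ t).trace.re ≤ 1 :=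
    ⟨evolvedState_nonneg hρ.nonneg t, by
      simpa [hρtr] using re_trace_evolvedState_le hρ.nonneg hKherm hKnorm t (mem_range.mp ht).le⟩
  have hground (t : ℕ) (ht : t ∈ range n) : -(evolvedState K ρ (t + 1) * P₀).trace.re
      ≤ Γ t * -(evolvedState K ρ t * P₀).trace.re + 2 * ε t := by
    have := ground_overlap_step (hstate t ht).1 (hstate t ht).2 (hKherm t ht) (hKnorm t ht)
      ⟨hPproj t ht, hPherm t ht⟩ (hcomm t ht) hP₀herm (hPP₀ t ht) (hΓ t ht)
      (by rw [le_iff, ← Complex.coe_smul]; exact hGamma t ht)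
    rw [evolvedState_succ K ρ (hKherm t ht)]
    linarith
  have hexcited (t : ℕ) (ht : t ∈ range n) : (evolvedState K ρ (t + 1) * (1 - P₀)).trace.re
      ≤ Δ t * (evolvedState K ρ t * (1 - P₀)).trace.re + 2 * ε t := by
    rw [evolvedState_succ K ρ (hKherm t ht)]
    exact excited_overlap_step (hstate t ht).1 (hstate t ht).2 (hKherm t ht) (hKnorm t ht)
      ⟨hPproj t ht, hPherm t ht⟩ (hcomm t ht) hP₀herm (hPP₀ t ht) (hΔ t ht) (hDelta t ht)
  have hlow := le_mul_prod_add_sum_of_le_mul_add (y := fun t => -(evolvedState K ρ t * P₀).trace.re)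
    (c := fun t => 2 * ε t) (fun t ht => (hΓ t ht).1) hground
  have hhigh := le_mul_prod_add_sum_of_le_mul_add (c := fun t => 2 * ε t)
    (y := fun t => (evolvedState K ρ t * (1 - P₀)).trace.re) (fun t ht => (hΔ t ht).1) hexcited
  simp only [evolvedState_zero, mul_assoc, ← mul_sum] at hlow hhigh
  refine ⟨?_, hhigh⟩
  change _ ≤ (evolvedState K ρ n * P₀).trace.re
  linarith

/-- Bounds on the ground-space overlap after applying a product of time-dependent AGSPs
`K = K_{n-1} ⋯ K_0`, each with its own parameters `(Γ_t, Δ_t)` and projector error `ε_t`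
relative to the common ground-space projector `Π₀`. -/
theorem stmt12 (D : ℕ) (hD : 1 ≤ D) (n : ℕ) (hn : 1 ≤ n)
    (K P : ℕ → Matrix (Fin D) (Fin D) ℂ)
    (P₀ : Matrix (Fin D) (Fin D) ℂ)
    (Γ Δ ε : ℕ → ℝ)
    (hP₀herm : P₀.IsHermitian) (hP₀proj : P₀ * P₀ = P₀)
    (hKherm : ∀ t ∈ Finset.range n, (K t).IsHermitian)
    (hKnorm : ∀ t ∈ Finset.range n, ‖K t‖ ≤ 1)
    (hPherm : ∀ t ∈ Finset.range n, (P t).IsHermitian)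
    (hPproj : ∀ t ∈ Finset.range n, P t * P t = P t)
    (hΓ : ∀ t ∈ Finset.range n, Γ t ∈ Set.Icc (0 : ℝ) 1)
    (hΔ : ∀ t ∈ Finset.range n, Δ t ∈ Set.Icc (0 : ℝ) 1)
    (hε : ∀ t ∈ Finset.range n, 0 ≤ ε t)
    (hcomm : ∀ t ∈ Finset.range n, K t * P t = P t * K t)
    (hGamma : ∀ t ∈ Finset.range n, (K t * P t - (Real.sqrt (Γ t) : ℂ) • P t).PosSemidef)
    (hDelta : ∀ t ∈ Finset.range n, ‖(1 - P t) * K t * (1 - P t)‖ ≤ Real.sqrt (Δ t))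
    (hPP₀ : ∀ t ∈ Finset.range n, ‖P t - P₀‖ ≤ ε t)
    (ρ : Matrix (Fin D) (Fin D) ℂ) (hρ : ρ.PosSemidef) (hρtr : ρ.trace = 1) :
    (let Kprod : Matrix (Fin D) (Fin D) ℂ := ((List.ofFn fun i : Fin n => K i).reverse).prod
     (ρ * P₀).trace.re * (∏ t ∈ Finset.range n, Γ t) -
         2 * ∑ t ∈ Finset.range n, ε t * ∏ s ∈ Finset.Ico (t + 1) n, Γ s ≤
       (Kprod * ρ * Kprodᴴ * P₀).trace.re ∧
     (Kprod * ρ * Kprodᴴ * (1 - P₀)).trace.re ≤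
       (ρ * (1 - P₀)).trace.re * (∏ t ∈ Finset.range n, Δ t) +
         2 * ∑ t ∈ Finset.range n, ε t * ∏ s ∈ Finset.Ico (t + 1) n, Δ s) :=
  stmt12_general D n K P P₀ Γ Δ ε hP₀herm hKherm hKnorm hPherm hPproj hΓ hΔ hcomm hGamma hDelta hPP₀
    ρ hρ hρtr
end
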